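/- Let Ω ⊂ ℝⁿ be measurable, m ∈ L¹(Ω,ℝ), α > 0, 1 < q < ∞ with 1/q + 1/q* = 1, and let h : Ω × ℝ^k → 2^{ℝ^k} be a multivalued map. Then the coercivity condition 'for a.e. x ∈ Ω and every v* ∈ h(x,v): α(|v|^q/q + |v*|^{q*}/q*) ≤ (v, v*) + m(x)' is equivalent to the existence of functions m_1, m_2 ∈ L¹(Ω,ℝ) and constants α_1, α_2 > 0 such that, for a.e. x ∈ Ω and every v* ∈ h(x,v): |v*|^{q*} ≤ m_1(x) + α_1 |v|^q and (v, v*) ≥ m_2(x) + α_2 |v|^q. -/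

import Mathlib

open MeasureTheory

/-- Euclidean inner product on `ℝ^k`. -/
noncomputable def dotk {k : ℕ} (a b : Fin k → ℝ) : ℝ := ∑ i, a i * b i

/-- Euclidean norm on `ℝ^k`. -/
noncomputable def nrmk {k : ℕ} (a : Fin k → ℝ) : ℝ := Real.sqrt (dotk a a)

lemma nrmk_nonneg {k : ℕ} (a : Fin k → ℝ) : 0 ≤ nrmk a := Real.sqrt_nonneg _

/-- Cauchy–Schwarz. -/
lemma dotk_le_nrmk {k : ℕ} (v vs : Fin k → ℝ) : dotk v vs ≤ nrmk v * nrmk vs := by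
  have h := Real.sum_mul_le_sqrt_mul_sqrt Finset.univ v vs
  simpa [dotk, nrmk, sq] using h

/-- For a measurable `Ω ⊆ ℝⁿ`, a multivalued map
`h : Ω × ℝ^k → 2^{ℝ^k}` and conjugate exponents `1 < q, q* < ∞`, the coercivity condition
`α(|v|^q/q + |v*|^{q*}/q*) ≤ (v,v*) + m(x)` (for some `α > 0`, `m ∈ L¹(Ω)`, a.e. `x` and all
`v* ∈ h(x,v)`) is equivalent to the existence of `m₁, m₂ ∈ L¹(Ω)` and `α₁, α₂ > 0` with
`|v*|^{q*} ≤ m₁(x) + α₁|v|^q` and `(v,v*) ≥ m₂(x) + α₂|v|^q` (a.e. `x`, all `v* ∈ h(x,v)`). -/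
theorem coercivity_equiv {n k : ℕ}
    (Ω : Set (Fin n → ℝ)) (hΩ : MeasurableSet Ω)
    (q qs : ℝ) (hq : 1 < q) (hqs : 1 < qs) (hconj : 1 / q + 1 / qs = 1)
    (h : (Fin n → ℝ) → (Fin k → ℝ) → Set (Fin k → ℝ)) :
    (∃ (α : ℝ) (m : (Fin n → ℝ) → ℝ), 0 < α ∧ Integrable m (volume.restrict Ω) ∧
        ∀ᵐ x ∂(volume.restrict Ω), ∀ v vs, vs ∈ h x v →
          α * (nrmk v ^ q / q + nrmk vs ^ qs / qs) ≤ dotk v vs + m x) ↔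
    (∃ (α₁ α₂ : ℝ) (m₁ m₂ : (Fin n → ℝ) → ℝ), 0 < α₁ ∧ 0 < α₂ ∧
        Integrable m₁ (volume.restrict Ω) ∧ Integrable m₂ (volume.restrict Ω) ∧
        (∀ᵐ x ∂(volume.restrict Ω), ∀ v vs, vs ∈ h x v →
          nrmk vs ^ qs ≤ m₁ x + α₁ * nrmk v ^ q) ∧
        (∀ᵐ x ∂(volume.restrict Ω), ∀ v vs, vs ∈ h x v →
          m₂ x + α₂ * nrmk v ^ q ≤ dotk v vs)) := by
  have hq0 : 0 < q := lt_trans zero_lt_one hq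
  have hqs0 : 0 < qs := lt_trans zero_lt_one hqs
  have hcq : Real.HolderConjugate q qs :=
    Real.holderConjugate_iff.mpr ⟨hq, by rw [← one_div, ← one_div]; exact hconj⟩
  constructor
  · rintro ⟨α, m, hα, hm, hae⟩
    set c : ℝ := (2 / α) ^ (qs⁻¹) with hc_def
    have h2α : (0:ℝ) < 2 / α := by positivity
    have hc : 0 < c := Real.rpow_pos_of_pos h2α _
    have hcqs : c ^ qs = 2 / α := by
      rw [hc_def, ← Real.rpow_mul h2α.le, inv_mul_cancel₀ (ne_of_gt hqs0), Real.rpow_one]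
    refine ⟨2 * qs * c ^ q / (α * q), α / q, fun x => (2 * qs / α) * m x,
      fun x => -m x, by positivity, by positivity, hm.const_mul _, hm.neg, ?_, ?_⟩
    · filter_upwards [hae] with x hx v vs hmem
      have key := hx v vs hmem
      set a := nrmk v ^ q with ha_def
      set b := nrmk vs ^ qs with hb_def
      have ha : 0 ≤ a := Real.rpow_nonneg (nrmk_nonneg v) _
      have hb : 0 ≤ b := Real.rpow_nonneg (nrmk_nonneg vs) _
      -- weighted Young
      have hyoung := Real.young_inequality_of_nonneg
        (mul_nonneg hc.le (nrmk_nonneg v)) (div_nonneg (nrmk_nonneg vs) hc.le) hcq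
      rw [Real.mul_rpow hc.le (nrmk_nonneg v), Real.div_rpow (nrmk_nonneg vs) hc.le,
        hcqs] at hyoung
      have hmm : c * nrmk v * (nrmk vs / c) = nrmk v * nrmk vs := by
        field_simp
      rw [hmm] at hyoung
      have hdiv : b / (2 / α) = α / 2 * b := by
        field_simp
      rw [← hb_def, ← ha_def, hdiv] at hyoung
      have hcs : dotk v vs ≤ nrmk v * nrmk vs := dotk_le_nrmk v vs
      -- so α*(a/q + b/qs) ≤ c^q*a/q + (α/2)*b/qs + m x
      have key2 : α / 2 * b / qs ≤ c ^ q * a / q + m x := by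
        have e : α * (a / q + b / qs) = α * a / q + α * b / qs := by ring
        have h1 : 0 ≤ α * a / q := by positivity
        have h2 : α * b / qs = 2 * (α / 2 * b / qs) := by ring
        linarith [key, hyoung, hcs]
      calc b = (2 * qs / α) * (α / 2 * b / qs) := by field_simp
        _ ≤ (2 * qs / α) * (c ^ q * a / q + m x) := by
            apply mul_le_mul_of_nonneg_left key2; positivity
        _ = (2 * qs / α) * m x + (2 * qs * c ^ q / (α * q)) * a := by
            field_simp; ring
    · filter_upwards [hae] with x hx v vs hmem
      have key := hx v vs hmem
      have hb : 0 ≤ nrmk vs ^ qs := Real.rpow_nonneg (nrmk_nonneg vs) _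
      have e : α * (nrmk v ^ q / q + nrmk vs ^ qs / qs)
          = (α / q) * nrmk v ^ q + (α / qs) * nrmk vs ^ qs := by ring
      have h2 : 0 ≤ (α / qs) * nrmk vs ^ qs := by positivity
      linarith [key, e ▸ key]
  · rintro ⟨α₁, α₂, m₁, m₂, hα₁, hα₂, hm₁, hm₂, hae1, hae2⟩
    have hD : 0 < 1 / q + α₁ / qs := by positivity
    refine ⟨α₂ / (1 / q + α₁ / qs), fun x => (α₂ / (1 / q + α₁ / qs)) / qs * m₁ x - m₂ x,
      by positivity, (hm₁.const_mul _).sub hm₂, ?_⟩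
    set α := α₂ / (1 / q + α₁ / qs) with hα_def
    have hα : 0 < α := by positivity
    have hαD : α * (1 / q + α₁ / qs) = α₂ := div_mul_cancel₀ _ (ne_of_gt hD)
    filter_upwards [hae1, hae2] with x h1 h2 v vs hmem
    have hb1 := h1 v vs hmem
    have hp := h2 v vs hmem
    set a := nrmk v ^ q with ha_def
    set b := nrmk vs ^ qs with hb_def
    have hmul : (α / qs) * b ≤ (α / qs) * (m₁ x + α₁ * a) :=
      mul_le_mul_of_nonneg_left hb1 (by positivity)
    have e1 : α * (a / q + b / qs) = (α / q) * a + (α / qs) * b := by ring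
    have e2 : (α / q) * a + (α / qs) * (m₁ x + α₁ * a)
        = (α * (1 / q + α₁ / qs)) * a + (α / qs) * m₁ x := by ring
    rw [hαD] at e2
    linarith
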